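/- arXiv:2405.00545 — 3 statements merged into one kernel-verified Lean document; each statement's English description precedes it below -/
import Mathlib

section
/- Let p ∈ ℝ^M be a probability vector with positive entries, s ∈ ℝ^{M×N} row-stochastic with q_j = Σ_i s_{ij} p_i > 0, d ∈ ℝ^{M×N}, and ζ ≥ 0. Define g_LM(φ, ψ, ζ) = 1 − Σ_{i,j} φ_i e^{-ζ d_{ij}} ψ_j − ζ Σ_{i,j} d_{ij} s_{ij} p_i − Σ_i p_i log p_i − Σ_j q_j log q_j + Σ_i p_i log φ_i + Σ_j q_j log ψ_j. Then the maximum of g_LM over positive ψ ∈ ℝ^N (with φ and ζ fixed, φ positive) equals Σ_i p_i log(φ_i/p_i) − ζ Σ_{i,j} d_{ij} s_{ij} p_i − Σ_j q_j log(Σ_k e^{-ζ d_{kj}} φ_k). -/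
open scoped BigOperators

theorem stmt_7 (M N : ℕ)
    (p : Fin M → ℝ) (hp : ∀ i, 0 < p i) (hpsum : ∑ i, p i = 1)
    (s : Fin M → Fin N → ℝ) (hs : ∀ i j, 0 ≤ s i j) (hssum : ∀ i, ∑ j, s i j = 1)
    (q : Fin N → ℝ) (hq : ∀ j, q j = ∑ i, s i j * p i) (hqpos : ∀ j, 0 < q j)
    (d : Fin M → Fin N → ℝ) (ζ : ℝ) (hζ : 0 ≤ ζ)
    (φ : Fin M → ℝ) (hφ : ∀ i, 0 < φ i)
    (g : (Fin N → ℝ) → ℝ)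
    (hg : ∀ ψ, g ψ = 1 - ∑ i, ∑ j, φ i * Real.exp (-ζ * d i j) * ψ j
        - ζ * ∑ i, ∑ j, d i j * s i j * p i
        - ∑ i, p i * Real.log (p i) - ∑ j, q j * Real.log (q j)
        + ∑ i, p i * Real.log (φ i) + ∑ j, q j * Real.log (ψ j)) :
    IsGreatest {v : ℝ | ∃ ψ : Fin N → ℝ, (∀ j, 0 < ψ j) ∧ v = g ψ}
      (∑ i, p i * Real.log (φ i / p i)
        - ζ * ∑ i, ∑ j, d i j * s i j * p i
        - ∑ j, q j * Real.log (∑ k, Real.exp (-ζ * d k j) * φ k)) := by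
  have hM : 0 < M := by
    rcases Nat.eq_zero_or_pos M with h | h
    · subst h; simp at hpsum
    · exact h
  haveI : Nonempty (Fin M) := ⟨⟨0, hM⟩⟩
  set A : Fin N → ℝ := fun j => ∑ k, Real.exp (-ζ * d k j) * φ k with hAdef
  have hA : ∀ j, 0 < A j := fun j =>
    Finset.sum_pos (fun k _ => mul_pos (Real.exp_pos _) (hφ k)) Finset.univ_nonempty
  have hqsum : ∑ j, q j = 1 := by
    calc ∑ j, q j = ∑ j, ∑ i, s i j * p i := by simp [hq]
    _ = ∑ i, ∑ j, s i j * p i := Finset.sum_comm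
    _ = ∑ i, (∑ j, s i j) * p i := by
        refine Finset.sum_congr rfl fun i _ => ?_
        rw [Finset.sum_mul]
    _ = 1 := by simp [hssum, hpsum]
  have hdouble : ∀ ψ : Fin N → ℝ,
      ∑ i, ∑ j, φ i * Real.exp (-ζ * d i j) * ψ j = ∑ j, A j * ψ j := by
    intro ψ
    rw [Finset.sum_comm]
    refine Finset.sum_congr rfl fun j _ => ?_
    rw [hAdef]
    simp only [Finset.sum_mul]
    refine Finset.sum_congr rfl fun i _ => by ring
  have key : ∀ ψ : Fin N → ℝ, (∀ j, 0 < ψ j) →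
      g ψ = (∑ i, p i * Real.log (φ i / p i)
        - ζ * ∑ i, ∑ j, d i j * s i j * p i
        - ∑ j, q j * Real.log (A j))
        + ∑ j, (q j * Real.log (ψ j * A j / q j) + q j - A j * ψ j) := by
    intro ψ hψ
    rw [hg, hdouble]
    have h1 : ∀ j, Real.log (ψ j * A j / q j)
        = Real.log (ψ j) + Real.log (A j) - Real.log (q j) := fun j => by
      rw [Real.log_div (ne_of_gt (mul_pos (hψ j) (hA j))) (ne_of_gt (hqpos j)),
        Real.log_mul (ne_of_gt (hψ j)) (ne_of_gt (hA j))]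
    have h2 : ∀ i, Real.log (φ i / p i) = Real.log (φ i) - Real.log (p i) := fun i => by
      rw [Real.log_div (ne_of_gt (hφ i)) (ne_of_gt (hp i))]
    simp only [h1, h2, mul_sub, mul_add]
    rw [Finset.sum_sub_distrib]
    simp only [Finset.sum_add_distrib, Finset.sum_sub_distrib, hqsum]
    ring
  constructor
  · refine ⟨fun j => q j / A j, fun j => div_pos (hqpos j) (hA j), ?_⟩
    rw [key _ (fun j => div_pos (hqpos j) (hA j))]
    have hz : ∀ j ∈ Finset.univ, q j * Real.log (q j / A j * A j / q j) + q j - A j * (q j / A j) = (0:ℝ) := by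
      intro j _
      have hx : q j / A j * A j / q j = 1 := by
        rw [div_mul_cancel₀ _ (ne_of_gt (hA j)), div_self (ne_of_gt (hqpos j))]
      rw [hx, Real.log_one, mul_zero, zero_add,
        mul_div_cancel₀ _ (ne_of_gt (hA j)), sub_self]
    rw [Finset.sum_congr rfl hz, Finset.sum_const_zero, add_zero]
  · rintro v ⟨ψ, hψpos, rfl⟩
    rw [key _ hψpos]
    have hle : ∀ j ∈ Finset.univ, q j * Real.log (ψ j * A j / q j) + q j - A j * ψ j ≤ 0 := by
      intro j _
      have hx : 0 < ψ j * A j / q j := div_pos (mul_pos (hψpos j) (hA j)) (hqpos j)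
      have hlog := Real.log_le_sub_one_of_pos hx
      have hq' := hqpos j
      have h3 : q j * Real.log (ψ j * A j / q j) ≤ q j * (ψ j * A j / q j - 1) :=
        mul_le_mul_of_nonneg_left hlog (le_of_lt hq')
      have h4 : q j * (ψ j * A j / q j - 1) = ψ j * A j - q j := by
        field_simp
      nlinarith
    have := Finset.sum_nonpos hle
    linarith
end

section
/- Let p ∈ ℝ^M be a probability vector with positive entries, s ∈ ℝ^{M×N} row-stochastic, q_j = Σ_i s_{ij} p_i, d ∈ ℝ^{M×N}, ζ ≥ 0, and let φ ∈ ℝ^M be positive. Setting φ̂_i = φ_i / p_i, the quantity Σ_i p_i log(φ_i/p_i) − ζ Σ_{i,j} d_{ij} s_{ij} p_i − Σ_j q_j log(Σ_k e^{-ζ d_{kj}} φ_k) equals Σ_{i,j} p_i s_{ij} log( e^{-ζ d_{ij}} φ̂_i / Σ_k p_k e^{-ζ d_{kj}} φ̂_k ). -/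
open scoped BigOperators

theorem stmt_8 (M N : ℕ)
    (p : Fin M → ℝ) (hp : ∀ i, 0 < p i) (hpsum : ∑ i, p i = 1)
    (s : Fin M → Fin N → ℝ) (hs : ∀ i j, 0 ≤ s i j) (hssum : ∀ i, ∑ j, s i j = 1)
    (q : Fin N → ℝ) (hq : ∀ j, q j = ∑ i, s i j * p i)
    (d : Fin M → Fin N → ℝ) (ζ : ℝ) (hζ : 0 ≤ ζ)
    (φ : Fin M → ℝ) (hφ : ∀ i, 0 < φ i)
    (φhat : Fin M → ℝ) (hφhat : ∀ i, φhat i = φ i / p i) :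
    ∑ i, p i * Real.log (φ i / p i)
      - ζ * ∑ i, ∑ j, d i j * s i j * p i
      - ∑ j, q j * Real.log (∑ k, Real.exp (-ζ * d k j) * φ k)
    = ∑ i, ∑ j, p i * s i j *
        Real.log (Real.exp (-ζ * d i j) * φhat i /
          ∑ k, p k * Real.exp (-ζ * d k j) * φhat k) := by
  have hM : Nonempty (Fin M) := by
    rcases isEmpty_or_nonempty (Fin M) with h | h
    · simp at hpsum
    · exact h
  set L : Fin N → ℝ := fun j => ∑ k, Real.exp (-ζ * d k j) * φ k with hL
  have hLpos : ∀ j, 0 < L j := fun j =>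
    Finset.sum_pos (fun k _ => mul_pos (Real.exp_pos _) (hφ k)) Finset.univ_nonempty
  have key : ∀ i j, Real.log (Real.exp (-ζ * d i j) * φhat i /
      ∑ k, p k * Real.exp (-ζ * d k j) * φhat k)
      = -ζ * d i j + Real.log (φ i / p i) - Real.log (L j) := by
    intro i j
    have hsum : (∑ k, p k * Real.exp (-ζ * d k j) * φhat k) = L j := by
      refine Finset.sum_congr rfl fun k _ => ?_
      rw [hφhat]
      field_simp [(hp k).ne']
    have hpos : 0 < φ i / p i := div_pos (hφ i) (hp i)
    rw [hsum, hφhat, Real.log_div (by positivity) (hLpos j).ne',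
      Real.log_mul (Real.exp_ne_zero _) hpos.ne', Real.log_exp]
  have h1 : ∑ i, p i * Real.log (φ i / p i)
      = ∑ i, ∑ j, p i * s i j * Real.log (φ i / p i) := by
    refine Finset.sum_congr rfl fun i _ => ?_
    have : ∑ j, p i * s i j * Real.log (φ i / p i)
        = (p i * Real.log (φ i / p i)) * ∑ j, s i j := by
      rw [Finset.mul_sum]; exact Finset.sum_congr rfl fun j _ => by ring
    rw [this, hssum, mul_one]
  have h2 : ζ * ∑ i, ∑ j, d i j * s i j * p i
      = ∑ i, ∑ j, p i * s i j * (ζ * d i j) := by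
    rw [Finset.mul_sum]
    refine Finset.sum_congr rfl fun i _ => ?_
    rw [Finset.mul_sum]
    exact Finset.sum_congr rfl fun j _ => by ring
  have h3 : ∑ j, q j * Real.log (L j)
      = ∑ i, ∑ j, p i * s i j * Real.log (L j) := by
    rw [Finset.sum_comm]
    refine Finset.sum_congr rfl fun j _ => ?_
    rw [hq, Finset.sum_mul]
    exact Finset.sum_congr rfl fun i _ => by ring
  rw [h1, h2, h3, ← Finset.sum_sub_distrib, ← Finset.sum_sub_distrib]
  refine Finset.sum_congr rfl fun i _ => ?_
  rw [← Finset.sum_sub_distrib, ← Finset.sum_sub_distrib]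
  refine Finset.sum_congr rfl fun j _ => ?_
  rw [key i j]
  ring
end

section
/- Let p be a probability vector with positive entries, s row-stochastic with all s_{ij} > 0, q_j = Σ_i s_{ij} p_i, d ∈ ℝ^{M×N}, ζ ≥ 0, and φ̂ ∈ ℝ^M positive. Then the dual objective value Σ_{i,j} p_i s_{ij} log( e^{-ζ d_{ij}} φ̂_i / Σ_k p_k e^{-ζ d_{kj}} φ̂_k ) is a lower bound on the LM rate primal value: for every joint distribution γ ∈ ℝ^{M×N}_{≥0} with marginals γ_X = p, γ_Y = q and Σ_{i,j} γ_{ij}(-d_{ij}) ≥ Σ_{i,j} p_i s_{ij}(-d_{ij}), it holds that Σ_{i,j} p_i s_{ij} log( e^{-ζ d_{ij}} φ̂_i / Σ_k p_k e^{-ζ d_{kj}} φ̂_k ) ≤ Σ_{i,j: γ_{ij}>0} γ_{ij} log( γ_{ij} / (p_i q_j) ). -/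
open scoped BigOperators

theorem stmt_15 (M N : ℕ)
    (p : Fin M → ℝ) (hp : ∀ i, 0 < p i) (hpsum : ∑ i, p i = 1)
    (s : Fin M → Fin N → ℝ) (hs : ∀ i j, 0 < s i j) (hssum : ∀ i, ∑ j, s i j = 1)
    (q : Fin N → ℝ) (hq : ∀ j, q j = ∑ i, s i j * p i)
    (d : Fin M → Fin N → ℝ) (ζ : ℝ) (hζ : 0 ≤ ζ)
    (φhat : Fin M → ℝ) (hφhat : ∀ i, 0 < φhat i)
    (γ : Fin M → Fin N → ℝ) (hγ : ∀ i j, 0 ≤ γ i j)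
    (hmargX : ∀ i, ∑ j, γ i j = p i) (hmargY : ∀ j, ∑ i, γ i j = q j)
    (hmetric : ∑ i, ∑ j, p i * s i j * (-(d i j)) ≤ ∑ i, ∑ j, γ i j * (-(d i j))) :
    ∑ i, ∑ j, p i * s i j *
        Real.log (Real.exp (-ζ * d i j) * φhat i /
          ∑ k, p k * Real.exp (-ζ * d k j) * φhat k)
      ≤ ∑ i, ∑ j, if 0 < γ i j then γ i j * Real.log (γ i j / (p i * q j)) else 0 := by
  have hM : 0 < M := by
    rcases Nat.eq_zero_or_pos M with h | h
    · subst h; simp at hpsum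
    · exact h
  haveI : Nonempty (Fin M) := ⟨⟨0, hM⟩⟩
  set Z : Fin N → ℝ := fun j => ∑ k, p k * Real.exp (-ζ * d k j) * φhat k with hZdef
  have hZ : ∀ j, 0 < Z j := fun j =>
    Finset.sum_pos (fun k _ => mul_pos (mul_pos (hp k) (Real.exp_pos _)) (hφhat k)) Finset.univ_nonempty
  have hqpos : ∀ j, 0 < q j := fun j => by
    rw [hq]; exact Finset.sum_pos (fun i _ => mul_pos (hs i j) (hp i)) Finset.univ_nonempty
  set L : Fin M → Fin N → ℝ := fun i j => Real.log (Real.exp (-ζ * d i j) * φhat i / Z j)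
    with hLdef
  have hL : ∀ i j, L i j = -ζ * d i j + Real.log (φhat i) - Real.log (Z j) := by
    intro i j
    show Real.log (Real.exp (-ζ * d i j) * φhat i / Z j) = _
    rw [Real.log_div (mul_pos (Real.exp_pos _) (hφhat i)).ne' (hZ j).ne',
      Real.log_mul (Real.exp_ne_zero _) (hφhat i).ne', Real.log_exp]
  have hpsX : ∀ i, ∑ j, p i * s i j = p i := by
    intro i; rw [← Finset.mul_sum, hssum i, mul_one]
  have hpsY : ∀ j, ∑ i, p i * s i j = q j := by
    intro j; rw [hq]; exact Finset.sum_congr rfl fun i _ => mul_comm _ _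
  have e1 : ∀ (c : Fin M → Fin N → ℝ), (∀ i, ∑ j, c i j = p i) → (∀ j, ∑ i, c i j = q j) →
      ∑ i, ∑ j, c i j * L i j
        = ζ * (∑ i, ∑ j, c i j * (-(d i j))) + ∑ i, p i * Real.log (φhat i)
          - ∑ j, q j * Real.log (Z j) := by
    intro c hcX hcY
    have hterm : ∀ i j, c i j * L i j
        = ζ * (c i j * (-(d i j))) + c i j * Real.log (φhat i) - c i j * Real.log (Z j) := by
      intro i j; rw [hL]; ring
    simp_rw [hterm]
    rw [show (∑ i, ∑ j, (ζ * (c i j * (-(d i j))) + c i j * Real.log (φhat i)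
        - c i j * Real.log (Z j)))
      = (∑ i, ∑ j, ζ * (c i j * (-(d i j)))) + (∑ i, ∑ j, c i j * Real.log (φhat i))
        - (∑ i, ∑ j, c i j * Real.log (Z j)) by
      simp [Finset.sum_add_distrib, Finset.sum_sub_distrib]]
    congr 1
    congr 1
    · simp_rw [← Finset.mul_sum]
    · refine Finset.sum_congr rfl fun i _ => ?_
      rw [← Finset.sum_mul, hcX, mul_comm]
    · rw [Finset.sum_comm]
      refine Finset.sum_congr rfl fun j _ => ?_
      rw [← Finset.sum_mul, hcY, mul_comm]
  have hB : ∑ i, ∑ j, p i * s i j * L i j ≤ ∑ i, ∑ j, γ i j * L i j := by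
    rw [e1 (fun i j => p i * s i j) hpsX hpsY, e1 γ hmargX hmargY]
    have := mul_le_mul_of_nonneg_left hmetric hζ
    linarith
  set μf : Fin M → Fin N → ℝ :=
    fun i j => p i * q j * (Real.exp (-ζ * d i j) * φhat i / Z j) with hμdef
  have hμpos : ∀ i j, 0 < μf i j := fun i j =>
    mul_pos (mul_pos (hp i) (hqpos j)) (div_pos (mul_pos (Real.exp_pos _) (hφhat i)) (hZ j))
  have key : ∀ i j, γ i j * L i j
      ≤ (if 0 < γ i j then γ i j * Real.log (γ i j / (p i * q j)) else 0)
        + (μf i j - γ i j) := by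
    intro i j
    by_cases hpos : 0 < γ i j
    · rw [if_pos hpos]
      have h1 : Real.log (μf i j / γ i j) ≤ μf i j / γ i j - 1 :=
        Real.log_le_sub_one_of_pos (div_pos (hμpos i j) hpos)
      have h2 : γ i j * Real.log (μf i j / γ i j) ≤ μf i j - γ i j := by
        calc γ i j * Real.log (μf i j / γ i j) ≤ γ i j * (μf i j / γ i j - 1) :=
              mul_le_mul_of_nonneg_left h1 hpos.le
          _ = μf i j - γ i j := by field_simp
      have h3 : L i j = Real.log (γ i j / (p i * q j)) + Real.log (μf i j / γ i j) := by
        rw [← Real.log_mul (div_pos hpos (mul_pos (hp i) (hqpos j))).ne'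
          (div_pos (hμpos i j) hpos).ne']
        show Real.log (Real.exp (-ζ * d i j) * φhat i / Z j) = _
        congr 1
        rw [hμdef]
        field_simp [hpos.ne', (hp i).ne', (hqpos j).ne', (hZ j).ne']
      calc γ i j * L i j
          = γ i j * Real.log (γ i j / (p i * q j)) + γ i j * Real.log (μf i j / γ i j) := by
            rw [h3]; ring
        _ ≤ γ i j * Real.log (γ i j / (p i * q j)) + (μf i j - γ i j) := by linarith
    · rw [if_neg hpos]
      have h0 : γ i j = 0 := le_antisymm (not_lt.mp hpos) (hγ i j)
      rw [h0]
      simpa using (hμpos i j).le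
  have hqsum : ∑ j, q j = 1 := by
    simp_rw [hq]
    rw [Finset.sum_comm]
    calc ∑ i, ∑ j, s i j * p i = ∑ i, (∑ j, s i j) * p i := by
          simp_rw [Finset.sum_mul]
      _ = 1 := by simp_rw [hssum]; simpa using hpsum
  have hsumμ : ∑ i, ∑ j, μf i j = 1 := by
    rw [Finset.sum_comm]
    have hcol : ∀ j, ∑ i, μf i j = q j := by
      intro j
      have : ∑ i, μf i j = (q j / Z j) * ∑ i, p i * Real.exp (-ζ * d i j) * φhat i := by
        rw [Finset.mul_sum]
        refine Finset.sum_congr rfl fun i _ => ?_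
        rw [hμdef]
        field_simp
      rw [this]
      rw [show (∑ i, p i * Real.exp (-ζ * d i j) * φhat i) = Z j from rfl]
      rw [div_mul_cancel₀ _ (hZ j).ne']
    simp_rw [hcol]
    exact hqsum
  have hsumγ : ∑ i, ∑ j, γ i j = 1 := by simp_rw [hmargX]; exact hpsum
  have hC : ∑ i, ∑ j, γ i j * L i j
      ≤ ∑ i, ∑ j, if 0 < γ i j then γ i j * Real.log (γ i j / (p i * q j)) else 0 := by
    have h := Finset.sum_le_sum (fun i (_ : i ∈ Finset.univ) =>
      Finset.sum_le_sum (fun j (_ : j ∈ Finset.univ) => key i j))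
    have hsplit : ∑ i, ∑ j, ((if 0 < γ i j then γ i j * Real.log (γ i j / (p i * q j)) else 0)
        + (μf i j - γ i j))
        = (∑ i, ∑ j, if 0 < γ i j then γ i j * Real.log (γ i j / (p i * q j)) else 0)
          + ((∑ i, ∑ j, μf i j) - ∑ i, ∑ j, γ i j) := by
      simp [Finset.sum_add_distrib, Finset.sum_sub_distrib]
    rw [hsplit, hsumμ, hsumγ] at h
    linarith
  calc ∑ i, ∑ j, p i * s i j * L i j ≤ ∑ i, ∑ j, γ i j * L i j := hB
    _ ≤ _ := hC
end
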